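/- arXiv:2412.11841 — 2 statements merged into one kernel-verified Lean document; each statement's English description precedes it below -/
import Mathlib

section
/- Let $d\geq 3$, $1\leq k\leq d$, $r_0>0$, $C=r_0^{d-k}-r_0^d$, and $u(r)=\int_{r_0}^r s(1+Cs^{-d})^{1/k}ds$. Then as $r\to\infty$, $u(r) = \frac{1}{2}r^2 + \mu(r_0) + O(r^{2-d})$, where $\mu(r_0) = -\frac{1}{2}r_0^2 + \int_{r_0}^{\infty} s\big((1+Cs^{-d})^{1/k}-1\big)\,ds$ (the integral being convergent since $d\geq 3$). -/
/-!
Write the integrand as `s + g s` with `g s = s * ((1 + C s^(-d))^(1/k) - 1)`. The choice of `C`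
makes `1 + C r₀^(-d) = r₀^(-k) > 0`, so the base stays positive on `[r₀, ∞)`, and for an
exponent in `[0, 1]` we have `|(1 + x)^p - 1| ≤ |x|`; hence `|g s| ≤ |C| s^(1-d)`. For `d ≥ 3`
this is integrable at infinity, and `u r - r²/2 + r₀²/2 - ∫_{r₀}^∞ g = -∫_r^∞ g = O(r^(2-d))`.
-/

open MeasureTheory Set

namespace Real

lemma abs_one_add_rpow_sub_one_le {x p : ℝ} (hx : -1 < x) (hp0 : 0 ≤ p) (hp1 : p ≤ 1) :
    |(1 + x) ^ p - 1| ≤ |x| := by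
  have hbase : 0 < 1 + x := by linarith
  rw [abs_le]
  constructor
  · rcases le_or_gt 0 x with hx0 | hx0
    · have : 1 ≤ (1 + x) ^ p := one_le_rpow (by linarith) hp0
      linarith [abs_nonneg x]
    · have : (1 + x) ^ (1 : ℝ) ≤ (1 + x) ^ p :=
        rpow_le_rpow_of_exponent_ge hbase (by linarith) hp1
      rw [rpow_one] at this
      rw [abs_of_neg hx0]
      linarith
  · have hbern := rpow_one_add_le_one_add_mul_self hx.le hp0 hp1
    have : p * x ≤ |x| := by
      rcases le_or_gt 0 x with hx0 | hx0
      · rw [abs_of_nonneg hx0]; nlinarith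
      · nlinarith [abs_nonneg x]
    linarith

lemma one_add_mul_rpow_neg_pos_of_le {a C r₀ s : ℝ} (ha : 0 ≤ a) (hr₀ : 0 < r₀)
    (h₀ : 0 < 1 + C * r₀ ^ (-a)) (hs : r₀ ≤ s) : 0 < 1 + C * s ^ (-a) := by
  rcases le_or_gt 0 C with hC | hC
  · have : 0 ≤ C * s ^ (-a) := mul_nonneg hC (rpow_nonneg (hr₀.le.trans hs) _)
    linarith
  · have : s ^ (-a) ≤ r₀ ^ (-a) := rpow_le_rpow_of_nonpos hr₀ hs (neg_nonpos.mpr ha)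
    nlinarith

lemma abs_mul_one_add_rpow_sub_one_le {a C p s : ℝ} (hs : 0 < s)
    (hbase : 0 < 1 + C * s ^ (-a)) (hp0 : 0 ≤ p) (hp1 : p ≤ 1) :
    |s * ((1 + C * s ^ (-a)) ^ p - 1)| ≤ |C| * s ^ (1 - a) :=
  calc |s * ((1 + C * s ^ (-a)) ^ p - 1)| ≤ s * |C * s ^ (-a)| := by
        rw [abs_mul, abs_of_pos hs]
        exact mul_le_mul_of_nonneg_left
          (abs_one_add_rpow_sub_one_le (by linarith) hp0 hp1) hs.le
    _ = |C| * (s ^ (1 : ℝ) * s ^ (-a)) := by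
        rw [abs_mul, abs_of_pos (rpow_pos_of_pos hs _), rpow_one]; ring
    _ = |C| * s ^ (1 - a) := by rw [← rpow_add hs, sub_eq_add_neg]

lemma one_add_mul_rpow_neg_eq {d k : ℕ} (hkd : k ≤ d) {r₀ : ℝ} (hr₀ : 0 < r₀) :
    1 + (r₀ ^ (d - k) - r₀ ^ d) * r₀ ^ (-(d : ℝ)) = r₀ ^ (-(k : ℝ)) := by
  rw [← rpow_natCast, ← rpow_natCast, Nat.cast_sub hkd, sub_mul,
    ← rpow_add hr₀, ← rpow_add hr₀, add_neg_cancel, rpow_zero]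
  ring_nf

end Real

section PowerDecay

variable {g : ℝ → ℝ} {a M c : ℝ}

lemma integrableOn_Ioi_of_abs_le_rpow (hg : AEStronglyMeasurable g (volume.restrict (Ioi c)))
    (ha : a < -1) (hc : 0 < c) (hbound : ∀ s, c < s → |g s| ≤ M * s ^ a) :
    IntegrableOn g (Ioi c) :=
  ((integrableOn_Ioi_rpow_of_lt ha hc).const_mul M).mono' hg <| by
    filter_upwards [ae_restrict_mem measurableSet_Ioi] with s hs using hbound s hs

lemma abs_integral_Ioi_le_of_abs_le_rpow (ha : a < -1) (hc : 0 < c)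
    (hbound : ∀ s, c < s → |g s| ≤ M * s ^ a) :
    |∫ s in Ioi c, g s| ≤ M * (-c ^ (a + 1) / (a + 1)) :=
  calc |∫ s in Ioi c, g s| ≤ ∫ s in Ioi c, M * s ^ a :=
        norm_integral_le_of_norm_le (f := g) ((integrableOn_Ioi_rpow_of_lt ha hc).const_mul M) <| by
          filter_upwards [ae_restrict_mem measurableSet_Ioi] with s hs using hbound s hs
    _ = M * (-c ^ (a + 1) / (a + 1)) := by
        rw [integral_const_mul, integral_Ioi_rpow_of_lt ha hc]

end PowerDecay

lemma intervalIntegral_id_add_eq {g : ℝ → ℝ} {a b : ℝ} (hab : a ≤ b)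
    (hg : IntegrableOn g (Ioi a)) :
    ∫ s in a..b, (s + g s) =
      b ^ 2 / 2 - a ^ 2 / 2 + ((∫ s in Ioi a, g s) - ∫ s in Ioi b, g s) := by
  have hgab : IntervalIntegrable g volume a b :=
    (intervalIntegrable_iff_integrableOn_Ioc_of_le hab).2 (hg.mono_set Ioc_subset_Ioi_self)
  rw [intervalIntegral.integral_add (continuous_id'.intervalIntegrable a b) hgab, integral_id,
    intervalIntegral.integral_Ioi_sub_Ioi hg hab]
  ring

theorem stmt6 (d k : ℕ) (hd : 3 ≤ d) (hk1 : 1 ≤ k) (hk2 : k ≤ d) (r0 : ℝ) (hr0 : 0 < r0)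
    (C : ℝ) (hC : C = r0 ^ (d - k) - r0 ^ d)
    (u : ℝ → ℝ)
    (hu : ∀ r : ℝ, u r = ∫ s in r0..r, s * (1 + C * s ^ (-(d : ℝ))) ^ ((1 : ℝ) / k)) :
    MeasureTheory.IntegrableOn
        (fun s : ℝ => s * ((1 + C * s ^ (-(d : ℝ))) ^ ((1 : ℝ) / k) - 1)) (Set.Ioi r0) ∧
    ∃ K R1 : ℝ, 0 < K ∧ r0 < R1 ∧ ∀ r : ℝ, R1 ≤ r →
      |u r - (r ^ 2 / 2 +
          (-(r0 ^ 2) / 2 +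
            ∫ s in Set.Ioi r0, s * ((1 + C * s ^ (-(d : ℝ))) ^ ((1 : ℝ) / k) - 1)))|
        ≤ K * r ^ ((2 : ℝ) - d) := by
  set g : ℝ → ℝ := fun s => s * ((1 + C * s ^ (-(d : ℝ))) ^ ((1 : ℝ) / k) - 1)
  have hp0 : (0 : ℝ) ≤ 1 / k := by positivity
  have hp1 : (1 : ℝ) / k ≤ 1 := div_le_one_of_le₀ (by exact_mod_cast hk1) (Nat.cast_nonneg k)
  have hd3 : (3 : ℝ) ≤ d := by exact_mod_cast hd
  have hdecay : (1 : ℝ) - d < -1 := by linarith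
  have hbound : ∀ s, r0 < s → |g s| ≤ |C| * s ^ ((1 : ℝ) - d) := fun s hs =>
    Real.abs_mul_one_add_rpow_sub_one_le (hr0.trans hs)
      (Real.one_add_mul_rpow_neg_pos_of_le (Nat.cast_nonneg d) hr0
        (by rw [hC, Real.one_add_mul_rpow_neg_eq hk2 hr0]; positivity) hs.le) hp0 hp1
  have hint : ∀ c, r0 ≤ c → IntegrableOn g (Ioi c) := fun c hc =>
    integrableOn_Ioi_of_abs_le_rpow (by fun_prop) hdecay (hr0.trans_le hc)
      fun s hs => hbound s (hc.trans_lt hs)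
  refine ⟨hint r0 le_rfl, |C| + 1, r0 + 1, by positivity, by linarith, fun r hr => ?_⟩
  have hr0r : r0 ≤ r := by linarith
  have hr : 0 < r := hr0.trans_le hr0r
  have hu' : u r = ∫ s in r0..r, (s + g s) := by
    rw [hu]; congr 1; funext s; ring
  rw [hu', intervalIntegral_id_add_eq hr0r (hint r0 le_rfl)]
  convert_to |-∫ s in Ioi r, g s| ≤ _ using 2
  · ring
  rw [abs_neg]
  calc |∫ s in Ioi r, g s| ≤ |C| * (-r ^ ((1 : ℝ) - d + 1) / ((1 : ℝ) - d + 1)) :=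
        abs_integral_Ioi_le_of_abs_le_rpow hdecay hr fun s hs => hbound s (hr0r.trans_lt hs)
    _ = |C| * r ^ ((2 : ℝ) - d) / (d - 2) := by
        rw [show (1 : ℝ) - d + 1 = 2 - d by ring, neg_div, ← div_neg, neg_sub]; ring
    _ ≤ (|C| + 1) * r ^ ((2 : ℝ) - d) := by
        have hrpow : 0 < r ^ ((2 : ℝ) - d) := Real.rpow_pos_of_pos hr _
        rw [div_le_iff₀ (by linarith)]
        nlinarith [mul_nonneg (mul_nonneg (abs_nonneg C) hrpow.le) (by linarith : (0 : ℝ) ≤ d - 3)]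
end

section
/- Let $u:\mathbb{R}^d\setminus\Omega\to\mathbb{R}$ be a $C^2$ locally strictly convex function on the complement of a bounded open set $\Omega$, and suppose $u=0$ and $\partial u/\partial\nu = 1$ on $\partial\Omega$, where $\nu$ is the outer unit normal of $\Omega$ and $\Omega$ is strictly convex. Then for every $x\in\mathbb{R}^d\setminus\bar\Omega$, $|Du(x)|>1$; i.e. the gradient image $Du(\mathbb{R}^d\setminus\bar\Omega)$ is contained in $\mathbb{R}^d\setminus\bar B_1(0)$. -/
/-! Let `y` be the point of `closure Ω` nearest to `x`, so that `n = x - y` is an outer normal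
at `y ∈ ∂Ω`. As `u` vanishes on `∂Ω` and is differentiable at `y`, `p = ∇u(y)` is orthogonal to
`∂Ω` at `y` to first order. Sliding a point `z ∈ Ω` along a normal `m` onto `∂Ω` then yields
`λ ≥ 0` with `⟪m, z - y + λm⟫ ≤ 0` and `⟪p, z - y + λm⟫ = 0`. From this, `p` is itself a normal,
`⟪p, m⟫ ≥ 0` for every normal `m`, and, applied to `⟪p, m⟫m - ‖m‖²p`, the equality case of
Cauchy–Schwarz `⟪p, m⟫ = ‖p‖‖m‖`: the normal cone at `y` is the ray through `p`. Taking
`m = ν(y)` gives `‖p‖ = 1`, hence `⟪p, n⟫ = ‖n‖`. Finally `t ↦ u(y + tn)` is strictly convex on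
`[0, 1]`, so `⟪∇u(x), n⟫ > ⟪p, n⟫ = ‖n‖`, and `‖∇u(x)‖ > 1` by Cauchy–Schwarz. -/

open scoped RealInnerProductSpace

open Set Filter Topology Asymptotics InnerProductSpace

theorem IsPreconnected.inter_frontier_nonempty {X : Type*} [TopologicalSpace X] {s t : Set X}
    (hs : IsPreconnected s) (hst : (s ∩ t).Nonempty) (hs't : (s \ t).Nonempty) :
    (s ∩ frontier t).Nonempty := by
  by_contra! h
  have hcover : s ⊆ interior t ∪ (closure t)ᶜ := fun x hx => by
    by_cases hxt : x ∈ closure t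
    · exact Or.inl (by_contra fun hxi => (h.subset ⟨hx, hxt, hxi⟩ : x ∈ (∅ : Set X)))
    · exact Or.inr hxt
  have hdisj : Disjoint (interior t) (closure t)ᶜ :=
    disjoint_compl_right.mono_left (interior_subset.trans subset_closure)
  rcases hs.subset_or_subset isOpen_interior isClosed_closure.isOpen_compl hdisj hcover with
    hint | hext
  · obtain ⟨x, hxs, hxt⟩ := hs't
    exact hxt (interior_subset (hint hxs))
  · obtain ⟨x, hxs, hxt⟩ := hst
    exact hext hxs (subset_closure hxt)

variable {E : Type*} [NormedAddCommGroup E] [InnerProductSpace ℝ E]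

def normalCone (s : Set E) (y : E) : Set E := {m | ∀ z ∈ s, ⟪m, z - y⟫ ≤ 0}

theorem normalCone_closure (s : Set E) (y : E) : normalCone (closure s) y = normalCone s y := by
  refine Subset.antisymm (fun m hm z hz => hm z (subset_closure hz)) fun m hm => ?_
  have hclosed : IsClosed {z : E | ⟪m, z - y⟫ ≤ 0} := isClosed_le (by fun_prop) continuous_const
  exact fun z hz => closure_minimal hm hclosed hz

theorem smul_mem_normalCone {s : Set E} {y m : E} {c : ℝ} (hc : 0 ≤ c)
    (hm : m ∈ normalCone s y) : c • m ∈ normalCone s y := fun z hz => by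
  rw [real_inner_smul_left]
  exact mul_nonpos_of_nonneg_of_nonpos hc (hm z hz)

theorem add_smul_notMem_of_mem_normalCone {s : Set E} {y m : E} {t : ℝ}
    (hm : m ∈ normalCone s y) (hm0 : m ≠ 0) (ht : 0 < t) : y + t • m ∉ s := fun hmem => by
  have h := hm _ hmem
  rw [add_sub_cancel_left, real_inner_smul_right, real_inner_self_eq_norm_sq] at h
  linarith [mul_pos ht (pow_pos (norm_pos_iff.2 hm0) 2)]

theorem inner_neg_of_mem_normalCone {s : Set E} {y m z : E} (hs : IsOpen s)
    (hm : m ∈ normalCone s y) (hm0 : m ≠ 0) (hz : z ∈ s) : ⟪m, z - y⟫ < 0 := by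
  obtain ⟨δ, hδ, hδs⟩ : ∃ δ : ℝ, 0 < δ ∧ z + δ • m ∈ s := by
    have hnear : ∀ᶠ δ in 𝓝[>] (0 : ℝ), z + δ • m ∈ s :=
      nhdsWithin_le_nhds <| (Continuous.tendsto (by fun_prop) 0).eventually
        (hs.mem_nhds (by simpa using hz))
    exact (hnear.and self_mem_nhdsWithin).exists.imp fun δ h => ⟨h.2, h.1⟩
  have h := hm _ hδs
  rw [add_sub_right_comm, inner_add_right, real_inner_smul_right, real_inner_self_eq_norm_sq] at h
  linarith [mul_pos hδ (pow_pos (norm_pos_iff.2 hm0) 2)]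

theorem exists_sub_mem_normalCone [CompleteSpace E] {K : Set E} (hK : IsClosed K)
    (hKc : Convex ℝ K) (hKne : K.Nonempty) (x : E) : ∃ y ∈ K, x - y ∈ normalCone K y := by
  obtain ⟨y, hyK, hy⟩ := exists_norm_eq_iInf_of_complete_convex hKne hK.isComplete hKc x
  exact ⟨y, hyK, (norm_eq_iInf_iff_real_inner_le_zero hKc hyK).1 hy⟩

variable {Ω : Set E} {y p : E}

theorem exists_add_smul_mem_frontier {m z : E} (hΩo : IsOpen Ω) (hΩc : Convex ℝ Ω)
    (hy : y ∈ closure Ω) (hm : m ∈ normalCone Ω y) (hm1 : ‖m‖ = 1) (hz : z ∈ Ω) {s : ℝ}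
    (hs : s ∈ Ioc (0 : ℝ) 1) :
    ∃ t ∈ Icc 0 (s * -⟪m, z - y⟫), y + s • (z - y) + t • m ∈ frontier Ω := by
  set c := y + s • (z - y)
  have hc : c ∈ Ω := by
    simpa only [hΩo.interior_eq] using
      hΩc.add_smul_sub_mem_interior' hy (by rwa [hΩo.interior_eq]) hs
  have hline : ∀ t : ℝ, ⟪m, c + t • m - y⟫ = s * ⟪m, z - y⟫ + t := fun t => by
    rw [show c + t • m - y = s • (z - y) + t • m by simp only [c]; abel, inner_add_right,
      real_inner_smul_right, real_inner_smul_right, real_inner_self_eq_norm_sq, hm1]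
    ring
  have hmz := hm z hz
  set L := s * -⟪m, z - y⟫ + 1
  have hL : 0 ≤ L := by nlinarith [hs.1]
  have hcL : c + L • m ∉ Ω := fun h => by linarith [hm _ h, hline L]
  obtain ⟨_, ⟨t, ht, rfl⟩, hfront⟩ :=
    (isPreconnected_Icc.image (fun t => c + t • m) (Continuous.continuousOn (by fun_prop))
      ).inter_frontier_nonempty ⟨c, ⟨0, ⟨le_rfl, hL⟩, by simp⟩, hc⟩
      ⟨_, ⟨L, ⟨hL, le_rfl⟩, rfl⟩, hcL⟩
  have ht' := (normalCone_closure Ω y ▸ hm) _ (frontier_subset_closure hfront)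
  exact ⟨t, ⟨ht.1, by linarith [hline t]⟩, hfront⟩

theorem exists_inner_eq_zero_of_mem_normalCone_of_norm_eq_one {m z : E} (hΩo : IsOpen Ω)
    (hΩc : Convex ℝ Ω) (hy : y ∈ closure Ω)
    (hp : (fun w => ⟪p, w - y⟫) =o[𝓝[frontier Ω] y] (fun w => w - y))
    (hm : m ∈ normalCone Ω y) (hm1 : ‖m‖ = 1) (hz : z ∈ Ω) :
    ∃ t ∈ Icc 0 (-⟪m, z - y⟫), ⟪p, z - y + t • m⟫ = 0 := by
  set a := -⟪m, z - y⟫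
  -- The boundary points `y + s • (z - y) + t s • m` tend to `y` at rate `O(s)`, so `p` is
  -- orthogonal to `z - y + (t s / s) • m` up to `o(1)`; take a limit point of `t s / s`.
  choose! t ht hfront using fun s (hs : s ∈ Ioc (0 : ℝ) 1) =>
    exists_add_smul_mem_frontier hΩo hΩc hy hm hm1 hz hs
  have hsmall : ∀ᶠ s in 𝓝[>] (0 : ℝ), s ∈ Ioc (0 : ℝ) 1 := Ioc_mem_nhdsGT one_pos
  have hbound : (fun s => y + s • (z - y) + t s • m - y) =O[𝓝[>] 0] id := by
    refine IsBigO.of_bound (‖z - y‖ + a) (hsmall.mono fun s hs => ?_)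
    have hts := ht s hs
    calc ‖y + s • (z - y) + t s • m - y‖ = ‖s • (z - y) + t s • m‖ := by
          rw [add_sub_right_comm, add_sub_cancel_left]
      _ ≤ s * ‖z - y‖ + t s := by
          refine (norm_add_le _ _).trans_eq ?_
          rw [norm_smul, norm_smul, hm1, Real.norm_of_nonneg hs.1.le,
            Real.norm_of_nonneg hts.1, mul_one]
      _ ≤ (‖z - y‖ + a) * ‖id s‖ := by
          rw [id, Real.norm_of_nonneg hs.1.le]
          nlinarith [hts.2]
  have htend : Tendsto (fun s => y + s • (z - y) + t s • m) (𝓝[>] 0) (𝓝[frontier Ω] y) := by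
    refine tendsto_nhdsWithin_iff.2 ⟨?_, hsmall.mono hfront⟩
    exact tendsto_sub_nhds_zero_iff.1
      (hbound.trans_tendsto (tendsto_id.mono_left nhdsWithin_le_nhds))
  have hlim : Tendsto (fun s => ⟪p, z - y + (t s / s) • m⟫) (𝓝[>] 0) (𝓝 0) := by
    refine ((hp.comp_tendsto htend).trans_isBigO hbound).tendsto_div_nhds_zero.congr'
      (hsmall.mono fun s hs => ?_)
    have hs0 : s ≠ 0 := hs.1.ne'
    simp only [Function.comp_apply, id]
    rw [add_sub_right_comm, add_sub_cancel_left, div_eq_inv_mul, ← real_inner_smul_right,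
      smul_add, smul_smul, inv_mul_cancel₀ hs0, one_smul, smul_smul, inv_mul_eq_div]
  have hclosed : IsClosed ((fun l : ℝ => ⟪p, z - y + l • m⟫) '' Icc 0 a) :=
    (isCompact_Icc.image (by fun_prop)).isClosed
  exact hclosed.mem_of_tendsto hlim <| hsmall.mono fun s hs =>
    mem_image_of_mem _ ⟨div_nonneg (ht s hs).1 hs.1.le,
      (div_le_iff₀ hs.1).2 (by linarith [(ht s hs).2])⟩

theorem exists_inner_eq_zero_of_mem_normalCone {m z : E} (hΩo : IsOpen Ω) (hΩc : Convex ℝ Ω)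
    (hy : y ∈ closure Ω) (hp : (fun w => ⟪p, w - y⟫) =o[𝓝[frontier Ω] y] (fun w => w - y))
    (hm : m ∈ normalCone Ω y) (hm0 : m ≠ 0) (hz : z ∈ Ω) :
    ∃ t : ℝ, 0 ≤ t ∧ ⟪m, z - y + t • m⟫ ≤ 0 ∧ ⟪p, z - y + t • m⟫ = 0 := by
  have hm' : 0 < ‖m‖ := norm_pos_iff.2 hm0
  obtain ⟨t, ht, htp⟩ := exists_inner_eq_zero_of_mem_normalCone_of_norm_eq_one hΩo hΩc hy hp
    (smul_mem_normalCone (inv_nonneg.2 hm'.le) hm) (norm_smul_inv_norm hm0) hz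
  rw [smul_smul] at htp
  refine ⟨t * ‖m‖⁻¹, mul_nonneg ht.1 (by positivity), ?_, htp⟩
  have htm : t * ‖m‖ ≤ -⟪m, z - y⟫ :=
    calc t * ‖m‖ ≤ -(‖m‖⁻¹ * ⟪m, z - y⟫) * ‖m‖ := by
          rw [← real_inner_smul_left]; exact mul_le_mul_of_nonneg_right ht.2 hm'.le
      _ = -⟪m, z - y⟫ := by field_simp
  have hsq : t * ‖m‖⁻¹ * ‖m‖ ^ 2 = t * ‖m‖ := by field_simp
  rw [inner_add_right, real_inner_smul_right, real_inner_self_eq_norm_sq, hsq]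
  linarith

theorem mem_normalCone_of_inner_pos {ν : E} (hΩo : IsOpen Ω) (hΩc : Convex ℝ Ω)
    (hy : y ∈ closure Ω) (hp : (fun w => ⟪p, w - y⟫) =o[𝓝[frontier Ω] y] (fun w => w - y))
    (hν : ν ∈ normalCone Ω y) (hpν : 0 < ⟪p, ν⟫) : p ∈ normalCone Ω y := fun z hz => by
  obtain ⟨t, ht0, -, htp⟩ := exists_inner_eq_zero_of_mem_normalCone hΩo hΩc hy hp hν
    (by rintro rfl; simp at hpν) hz
  rw [inner_add_right, real_inner_smul_right] at htp
  nlinarith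

theorem inner_nonneg_of_mem_normalCone {m : E} (hΩo : IsOpen Ω) (hΩc : Convex ℝ Ω)
    (hΩne : Ω.Nonempty) (hy : y ∈ closure Ω)
    (hp : (fun w => ⟪p, w - y⟫) =o[𝓝[frontier Ω] y] (fun w => w - y))
    (hpN : p ∈ normalCone Ω y) (hp0 : p ≠ 0) (hm : m ∈ normalCone Ω y) : 0 ≤ ⟪p, m⟫ := by
  rcases eq_or_ne m 0 with rfl | hm0
  · simp
  obtain ⟨z, hz⟩ := hΩne
  obtain ⟨t, ht0, -, htp⟩ := exists_inner_eq_zero_of_mem_normalCone hΩo hΩc hy hp hm hm0 hz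
  have hpz := inner_neg_of_mem_normalCone hΩo hpN hp0 hz
  rw [inner_add_right, real_inner_smul_right] at htp
  nlinarith

theorem inner_smul_sub_smul_mem_normalCone {m : E} (hΩo : IsOpen Ω) (hΩc : Convex ℝ Ω)
    (hy : y ∈ closure Ω) (hp : (fun w => ⟪p, w - y⟫) =o[𝓝[frontier Ω] y] (fun w => w - y))
    (hm : m ∈ normalCone Ω y) (hpm : 0 ≤ ⟪p, m⟫) :
    ⟪p, m⟫ • m - ‖m‖ ^ 2 • p ∈ normalCone Ω y := fun z hz => by
  rcases eq_or_ne m 0 with rfl | hm0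
  · simp
  obtain ⟨t, ht0, htm, htp⟩ := exists_inner_eq_zero_of_mem_normalCone hΩo hΩc hy hp hm hm0 hz
  rw [inner_add_right, real_inner_smul_right] at htm htp
  rw [real_inner_self_eq_norm_sq] at htm
  rw [inner_sub_left, real_inner_smul_left, real_inner_smul_left]
  nlinarith

theorem inner_eq_norm_mul_norm_of_mem_normalCone {ν m : E} (hΩo : IsOpen Ω) (hΩc : Convex ℝ Ω)
    (hΩne : Ω.Nonempty) (hy : y ∈ closure Ω)
    (hp : (fun w => ⟪p, w - y⟫) =o[𝓝[frontier Ω] y] (fun w => w - y))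
    (hν : ν ∈ normalCone Ω y) (hpν : 0 < ⟪p, ν⟫) (hm : m ∈ normalCone Ω y) :
    ⟪p, m⟫ = ‖p‖ * ‖m‖ := by
  have hpN := mem_normalCone_of_inner_pos hΩo hΩc hy hp hν hpν
  have hp0 : p ≠ 0 := by rintro rfl; simp at hpν
  have hpm := inner_nonneg_of_mem_normalCone hΩo hΩc hΩne hy hp hpN hp0 hm
  have hpq := inner_nonneg_of_mem_normalCone hΩo hΩc hΩne hy hp hpN hp0
    (inner_smul_sub_smul_mem_normalCone hΩo hΩc hy hp hm hpm)
  rw [inner_sub_right, real_inner_smul_right, real_inner_smul_right,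
    real_inner_self_eq_norm_sq] at hpq
  refine le_antisymm (real_inner_le_norm p m) ?_
  nlinarith [norm_nonneg p, norm_nonneg m]

theorem HasGradientAt.isLittleO_inner_sub [CompleteSpace E] {u : E → ℝ} {s : Set E}
    (hu : HasGradientAt u p y) (hs : ∀ w ∈ s, u w = u y) :
    (fun w => ⟪p, w - y⟫) =o[𝓝[s] y] (fun w => w - y) :=
  (hu.hasFDerivAt.isLittleO.mono nhdsWithin_le_nhds).neg_left.congr'
    (eventually_mem_nhdsWithin.mono fun w hw => by simp [hs w hw]) EventuallyEq.rfl

section Line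

variable {F : Type*} [NormedAddCommGroup F] [NormedSpace ℝ F] {u : F → ℝ} {y v : F}

theorem hasDerivAt_comp_add_smul {t : ℝ} (hu : DifferentiableAt ℝ u (y + t • v)) :
    HasDerivAt (fun s : ℝ => u (y + s • v)) (fderiv ℝ u (y + t • v) v) t := by
  have hline : HasDerivAt (fun s : ℝ => y + s • v) v t := by
    simpa using ((hasDerivAt_id t).smul_const v).const_add y
  exact hu.hasFDerivAt.comp_hasDerivAt t hline

theorem hasDerivAt_fderiv_comp_add_smul {t : ℝ} (hu : ContDiffAt ℝ 2 u (y + t • v)) :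
    HasDerivAt (fun s : ℝ => fderiv ℝ u (y + s • v) v)
      (iteratedFDeriv ℝ 2 u (y + t • v) ![v, v]) t := by
  have hline : HasDerivAt (fun s : ℝ => y + s • v) v t := by
    simpa using ((hasDerivAt_id t).smul_const v).const_add y
  have hDu : DifferentiableAt ℝ (fderiv ℝ u) (y + t • v) :=
    (hu.fderiv_right (m := 1) (by norm_num)).differentiableAt one_ne_zero
  rw [iteratedFDeriv_two_apply]
  exact (ContinuousLinearMap.apply ℝ ℝ v).hasFDerivAt.comp_hasDerivAt t
    (hDu.hasFDerivAt.comp_hasDerivAt t hline)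

theorem fderiv_apply_lt_fderiv_add_apply (hy : DifferentiableAt ℝ u y)
    (hu : ∀ t ∈ Ioc (0 : ℝ) 1, ContDiffAt ℝ 2 u (y + t • v))
    (hpos : ∀ t ∈ Ioc (0 : ℝ) 1, 0 < iteratedFDeriv ℝ 2 u (y + t • v) ![v, v]) :
    fderiv ℝ u y v < fderiv ℝ u (y + v) v := by
  have hdiff : ∀ t ∈ Icc (0 : ℝ) 1, DifferentiableAt ℝ u (y + t • v) := by
    rintro t ⟨ht0, ht1⟩
    rcases ht0.eq_or_lt with rfl | ht0
    · simpa using hy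
    · exact (hu t ⟨ht0, ht1⟩).differentiableAt two_ne_zero
  have hderiv2 : ∀ t ∈ Ioo (0 : ℝ) 1,
      deriv^[2] (fun s : ℝ => u (y + s • v)) t = iteratedFDeriv ℝ 2 u (y + t • v) ![v, v] := by
    intro t ht
    have heq : deriv (fun s : ℝ => u (y + s • v)) =ᶠ[𝓝 t] fun s => fderiv ℝ u (y + s • v) v :=
      eventually_of_mem (Ioo_mem_nhds ht.1 ht.2) fun s hs =>
        (hasDerivAt_comp_add_smul (hdiff s (Ioo_subset_Icc_self hs))).deriv
    exact ((hasDerivAt_fderiv_comp_add_smul (hu t (Ioo_subset_Ioc_self ht))).congr_of_eventuallyEq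
      heq).deriv
  have hconvex : StrictConvexOn ℝ (Icc 0 1) fun s : ℝ => u (y + s • v) := by
    refine strictConvexOn_of_deriv2_pos (convex_Icc 0 1)
      (fun t ht => (hasDerivAt_comp_add_smul (hdiff t ht)).continuousAt.continuousWithinAt) ?_
    rw [interior_Icc]
    exact fun t ht => hderiv2 t ht ▸ hpos t (Ioo_subset_Ioc_self ht)
  have h0 := hasDerivAt_comp_add_smul (hdiff 0 (left_mem_Icc.2 zero_le_one))
  have h1 := hasDerivAt_comp_add_smul (hdiff 1 (right_mem_Icc.2 zero_le_one))
  simp only [zero_smul, add_zero, one_smul] at h0 h1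
  exact (hconvex.lt_slope_of_hasDerivAt (left_mem_Icc.2 zero_le_one)
    (right_mem_Icc.2 zero_le_one) one_pos h0).trans
    (hconvex.slope_lt_of_hasDerivAt (left_mem_Icc.2 zero_le_one)
      (right_mem_Icc.2 zero_le_one) one_pos h1)

end Line

theorem stmt10_general (d : ℕ) (Ω : Set (EuclideanSpace ℝ (Fin d)))
    (hΩo : IsOpen Ω) (hΩc : StrictConvex ℝ Ω)
    (hΩne : Ω.Nonempty)
    (u : EuclideanSpace ℝ (Fin d) → ℝ)
    (hu : ContDiffOn ℝ 2 u Ωᶜ)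
    (hconv : ∀ x ∉ Ω, ∀ v : EuclideanSpace ℝ (Fin d), v ≠ 0 →
      0 < iteratedFDeriv ℝ 2 u x ![v, v])
    (ν : EuclideanSpace ℝ (Fin d) → EuclideanSpace ℝ (Fin d))
    (hν : ∀ x ∈ frontier Ω, ‖ν x‖ = 1 ∧ ∀ y ∈ closure Ω, ⟪ν x, y - x⟫ ≤ 0)
    (hbd0 : ∀ x ∈ frontier Ω, u x = 0)
    (hbd1 : ∀ x ∈ frontier Ω, ⟪gradient u x, ν x⟫ = 1) :
    ∀ x ∉ closure Ω, 1 < ‖gradient u x‖ := by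
  intro x hx
  obtain ⟨y, hy, hxy⟩ :=
    exists_sub_mem_normalCone isClosed_closure hΩc.convex.closure hΩne.closure x
  have hxy0 : x - y ≠ 0 := sub_ne_zero.2 fun h => hx (h ▸ hy)
  have hxyN : x - y ∈ normalCone Ω y := by rwa [← normalCone_closure]
  have hyf : y ∈ frontier Ω := by
    refine ⟨hy, fun hyΩ => ?_⟩
    have := inner_neg_of_mem_normalCone hΩo hxyN hxy0 (interior_subset hyΩ)
    simp at this
  obtain ⟨hν1, hνN⟩ := hν y hyf
  replace hνN : ν y ∈ normalCone Ω y := by rw [← normalCone_closure]; exact hνN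
  have hdiff : DifferentiableAt ℝ u y := by
    -- otherwise `gradient u y = 0`, contradicting `hbd1`
    by_contra h
    simpa [gradient_eq_zero_of_not_differentiableAt h] using hbd1 y hyf
  have hp := hdiff.hasGradientAt.isLittleO_inner_sub fun w hw =>
    (hbd0 w hw).trans (hbd0 y hyf).symm
  have hnormal : ∀ m ∈ normalCone Ω y, ⟪gradient u y, m⟫ = ‖gradient u y‖ * ‖m‖ :=
    fun m hm => inner_eq_norm_mul_norm_of_mem_normalCone hΩo hΩc.convex hΩne hy hp hνN
      (by rw [hbd1 y hyf]; exact one_pos) hm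
  have hp1 : ‖gradient u y‖ = 1 := by simpa [hbd1 y hyf, hν1] using (hnormal _ hνN).symm
  have hray : ∀ t ∈ Ioc (0 : ℝ) 1, y + t • (x - y) ∉ closure Ω := fun t ht =>
    add_smul_notMem_of_mem_normalCone hxy hxy0 ht.1
  have hlt := fderiv_apply_lt_fderiv_add_apply hdiff
    (fun t ht => hu.contDiffAt (mem_of_superset (isClosed_closure.isOpen_compl.mem_nhds
      (hray t ht)) (compl_subset_compl.2 subset_closure)))
    (fun t ht => hconv _ (fun h => hray t ht (subset_closure h)) _ hxy0)
  rw [← inner_gradient_left, ← inner_gradient_left, add_sub_cancel, hnormal _ hxyN, hp1,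
    one_mul] at hlt
  exact (lt_mul_iff_one_lt_left (norm_pos_iff.2 hxy0)).1
    (hlt.trans_le (real_inner_le_norm _ _))

theorem stmt10 (d : ℕ) (hd : 3 ≤ d) (Ω : Set (EuclideanSpace ℝ (Fin d)))
    (hΩo : IsOpen Ω) (hΩb : Bornology.IsBounded Ω) (hΩc : StrictConvex ℝ Ω)
    (hΩne : Ω.Nonempty)
    (u : EuclideanSpace ℝ (Fin d) → ℝ)
    (hu : ContDiffOn ℝ 2 u Ωᶜ)
    (hconv : ∀ x ∉ Ω, ∀ v : EuclideanSpace ℝ (Fin d), v ≠ 0 →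
      0 < iteratedFDeriv ℝ 2 u x ![v, v])
    (ν : EuclideanSpace ℝ (Fin d) → EuclideanSpace ℝ (Fin d))
    (hν : ∀ x ∈ frontier Ω, ‖ν x‖ = 1 ∧ ∀ y ∈ closure Ω, ⟪ν x, y - x⟫ ≤ 0)
    (hbd0 : ∀ x ∈ frontier Ω, u x = 0)
    (hbd1 : ∀ x ∈ frontier Ω, ⟪gradient u x, ν x⟫ = 1) :
    ∀ x ∉ closure Ω, 1 < ‖gradient u x‖ :=
  stmt10_general d Ω hΩo hΩc hΩne u hu hconv ν hν hbd0 hbd1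
end
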